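/- Let 2 ≤ k ≤ d ≤ d' be integers with k not dividing d, and write d = s·k + r with 0 < r < k (so s ≥ 1). Then for every integer t with 0 ≤ t ≤ k−r−1 and d'−t ≥ k, there exists an s·k·(d'−t)-number USV1Bk in M_{d×d'}; moreover one can be chosen consisting of matrices supported on the top-left s·k × (d'−t) submatrix. Equivalently, there is an s·k·(d'−t)-number special unextendible entangled basis with Schmidt number k (SUEBk) in ℂ^d ⊗ ℂ^{d'}. -/
import Mathlib

open Matrix

/-- `A` is a `k`-singular-value-1 matrix. -/
def IsSV1 {m n : Type*} [Fintype m] [Fintype n] (k : ℕ) (A : Matrix m n ℂ) : Prop :=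
  (Aᴴ * A) * (Aᴴ * A) = Aᴴ * A ∧ A.rank = k

namespace SUEBhelper

noncomputable section

open Finset Complex
open scoped ComplexOrder

/-- entries of the building-block matrices -/
def bm (k q : ℕ) (ζ : ℂ) (a u v : ℕ) (x y : ℕ) : ℂ :=
  if a * k ≤ x ∧ x < a * k + k ∧ y = ((x - a * k) + v) % q then ζ ^ (u * (x - a * k)) else 0

lemma bm_in (k q : ℕ) (ζ : ℂ) (a u v i y : ℕ) (hi : i < k) :
    bm k q ζ a u v (a * k + i) y = if y = (i + v) % q then ζ ^ (u * i) else 0 := by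
  have h3 : a * k + i - a * k = i := by omega
  simp only [bm, h3]
  have h1 : a * k ≤ a * k + i := Nat.le_add_right _ _
  have h2 : a * k + i < a * k + k := by omega
  simp [h1, h2]

lemma bm_out (k q : ℕ) (ζ : ℂ) (a u v x y : ℕ) (h : ¬ (a * k ≤ x ∧ x < a * k + k)) :
    bm k q ζ a u v x y = 0 := by
  rw [bm, if_neg]; tauto

lemma bm_support (k q s : ℕ) (ζ : ℂ) (a u v x y : ℕ) (hq0 : 0 < q) (ha : a < s)
    (h : s * k ≤ x ∨ q ≤ y) : bm k q ζ a u v x y = 0 := by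
  rw [bm, if_neg]
  rintro ⟨h1, h2, h3⟩
  have hmod : ((x - a * k) + v) % q < q := Nat.mod_lt _ hq0
  have hmul : (a + 1) * k ≤ s * k := Nat.mul_le_mul_right k ha
  have hsucc : (a + 1) * k = a * k + k := by ring
  omega

/-- the block matrices, as matrices of size `d × d'`. -/
def MB (k q d d' : ℕ) (ζ : ℂ) (a u v : ℕ) : Matrix (Fin d) (Fin d') ℂ :=
  Matrix.of fun x y => bm k q ζ a u v x y

def rowF (k s d : ℕ) (hsk : s * k ≤ d) (a : ℕ) (ha : a < s) (i : Fin k) : Fin d :=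
  ⟨a * k + i, by
    have hi := i.2
    have hmul : (a + 1) * k ≤ s * k := Nat.mul_le_mul_right k ha
    have hsucc : (a + 1) * k = a * k + k := by ring
    omega⟩

def colF (q d' : ℕ) (hq0 : 0 < q) (hqd : q ≤ d') (n : ℕ) : Fin d' :=
  ⟨n % q, lt_of_lt_of_le (Nat.mod_lt n hq0) hqd⟩

lemma fourier_sum (k : ℕ) (hk : 0 < k) {ζ : ℂ} (hζ : IsPrimitiveRoot ζ k)
    (hconj : (starRingEnd ℂ) ζ = ζ⁻¹) (u u' : ℕ) (hu : u < k) (hu' : u' < k) :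
    ∑ i ∈ Finset.range k, (starRingEnd ℂ) (ζ ^ (u * i)) * ζ ^ (u' * i)
      = if u = u' then (k : ℂ) else 0 := by
  have hζ0 : ζ ≠ 0 := by
    intro h0
    have := hζ.pow_eq_one
    rw [h0, zero_pow (by omega)] at this
    exact one_ne_zero this.symm
  have key : ∀ i, (starRingEnd ℂ) (ζ ^ (u * i)) * ζ ^ (u' * i) = (ζ ^ u' / ζ ^ u) ^ i := by
    intro i
    rw [map_pow, hconj, inv_pow, inv_mul_eq_div, div_pow, ← pow_mul, ← pow_mul]
  rw [Finset.sum_congr rfl fun i _ => key i]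
  by_cases h : u = u'
  · subst h
    simp [div_self (pow_ne_zero u hζ0)]
  · rw [if_neg h]
    have hz1 : ζ ^ u' / ζ ^ u ≠ 1 := by
      intro hcon
      have : ζ ^ u' = ζ ^ u := by
        field_simp at hcon
        exact hcon
      exact h (hζ.pow_inj hu' hu this).symm
    have hzk : (ζ ^ u' / ζ ^ u) ^ k = 1 := by
      rw [div_pow, ← pow_mul, ← pow_mul, mul_comm u' k, mul_comm u k, pow_mul, pow_mul,
        hζ.pow_eq_one, one_pow, one_pow]
      exact div_self one_ne_zero
    rw [geom_sum_eq hz1, hzk]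
    simp

lemma mod_add_left_inj (q i v v' : ℕ) (hv : v < q) (hv' : v' < q)
    (h : (i + v) % q = (i + v') % q) : v = v' := by
  have := Nat.ModEq.add_left_cancel' i (h : (i + v) ≡ (i + v') [MOD q])
  have h2 : v % q = v' % q := this
  rwa [Nat.mod_eq_of_lt hv, Nat.mod_eq_of_lt hv'] at h2

lemma mod_add_right_inj (q i i' v : ℕ) (hi : i < q) (hi' : i' < q)
    (h : (i + v) % q = (i' + v) % q) : i = i' := by
  have := Nat.ModEq.add_right_cancel' v (h : (i + v) ≡ (i' + v) [MOD q])
  have h2 : i % q = i' % q := this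
  rwa [Nat.mod_eq_of_lt hi, Nat.mod_eq_of_lt hi'] at h2

/-- Master lemma: trace of `(MB a u v)ᴴ * B`. -/
lemma trace_MB (k s q d d' : ℕ) (ζ : ℂ) (hq0 : 0 < q) (hqd : q ≤ d') (hsk : s * k ≤ d)
    (a u v : ℕ) (ha : a < s) (B : Matrix (Fin d) (Fin d') ℂ) :
    ((MB k q d d' ζ a u v)ᴴ * B).trace
      = ∑ i : Fin k, (starRingEnd ℂ) (ζ ^ (u * (i : ℕ))) *
          B (rowF k s d hsk a ha i) (colF q d' hq0 hqd ((i : ℕ) + v)) := by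
  have expand : ((MB k q d d' ζ a u v)ᴴ * B).trace
      = ∑ x : Fin d, ∑ j : Fin d', (starRingEnd ℂ) (bm k q ζ a u v x j) * B x j := by
    rw [Matrix.trace]
    simp only [Matrix.diag, Matrix.mul_apply, Matrix.conjTranspose_apply, MB, Matrix.of_apply,
      Complex.star_def]
    exact Finset.sum_comm
  rw [expand]
  have hinj : Function.Injective (rowF k s d hsk a ha) := by
    intro i j hij
    have : (rowF k s d hsk a ha i : ℕ) = (rowF k s d hsk a ha j : ℕ) := by rw [hij]
    simp only [rowF] at this
    exact Fin.ext (by omega)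
  rw [show (Finset.univ : Finset (Fin d))
      = Finset.univ.image (rowF k s d hsk a ha) ∪ Finset.univ \ Finset.univ.image (rowF k s d hsk a ha) from by
        simp [Finset.union_sdiff_of_subset (Finset.subset_univ _)]]
  rw [Finset.sum_union (Finset.disjoint_sdiff)]
  have hzero : ∑ x ∈ Finset.univ \ Finset.univ.image (rowF k s d hsk a ha),
      ∑ j : Fin d', (starRingEnd ℂ) (bm k q ζ a u v x j) * B x j = 0 := by
    apply Finset.sum_eq_zero
    intro x hx
    rw [Finset.mem_sdiff, Finset.mem_image] at hx
    have hnb : ¬ (a * k ≤ (x : ℕ) ∧ (x : ℕ) < a * k + k) := by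
      intro hb
      exact hx.2 ⟨⟨(x : ℕ) - a * k, by omega⟩, Finset.mem_univ _,
        Fin.ext (by simp [rowF]; omega)⟩
    apply Finset.sum_eq_zero
    intro j _
    rw [bm_out k q ζ a u v _ _ hnb, map_zero, zero_mul]
  rw [hzero, add_zero, Finset.sum_image (fun i _ j _ h => hinj h)]
  apply Finset.sum_congr rfl
  intro i _
  have hrow : ((rowF k s d hsk a ha i : Fin d) : ℕ) = a * k + (i : ℕ) := rfl
  have hbm : ∀ j : Fin d', bm k q ζ a u v (rowF k s d hsk a ha i) j
      = if j = colF q d' hq0 hqd ((i : ℕ) + v) then ζ ^ (u * (i : ℕ)) else 0 := by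
    intro j
    rw [hrow, bm_in k q ζ a u v i j i.2]
    congr 1
    simp only [colF, Fin.ext_iff]
  simp only [hbm, apply_ite (starRingEnd ℂ), map_zero, ite_mul, zero_mul]
  rw [Finset.sum_ite_eq' Finset.univ (colF q d' hq0 hqd ((i : ℕ) + v))
    (fun j => (starRingEnd ℂ) (ζ ^ (u * (i : ℕ))) * B (rowF k s d hsk a ha i) j)]
  simp

/-- pairwise traces -/
lemma pair_trace (k s q d d' : ℕ) (ζ : ℂ) (hk : 0 < k) (hkq : k ≤ q) (hqd : q ≤ d')
    (hsk : s * k ≤ d) (hζ : IsPrimitiveRoot ζ k) (hconj : (starRingEnd ℂ) ζ = ζ⁻¹)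
    (a a' u u' v v' : ℕ) (ha : a < s) (ha' : a' < s) (hu : u < k) (hu' : u' < k)
    (hv : v < q) (hv' : v' < q) :
    ((MB k q d d' ζ a u v)ᴴ * MB k q d d' ζ a' u' v').trace
      = if a = a' ∧ u = u' ∧ v = v' then (k : ℂ) else 0 := by
  have hq0 : 0 < q := lt_of_lt_of_le hk hkq
  rw [trace_MB k s q d d' ζ hq0 hqd hsk a u v ha]
  by_cases haa : a = a'
  · subst haa
    have hentry : ∀ i : Fin k,
        (MB k q d d' ζ a u' v') (rowF k s d hsk a ha i) (colF q d' hq0 hqd ((i : ℕ) + v))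
        = if ((i : ℕ) + v) % q = ((i : ℕ) + v') % q then ζ ^ (u' * (i : ℕ)) else 0 := by
      intro i
      have hrow : ((rowF k s d hsk a ha i : Fin d) : ℕ) = a * k + (i : ℕ) := rfl
      have : (MB k q d d' ζ a u' v') (rowF k s d hsk a ha i) (colF q d' hq0 hqd ((i : ℕ) + v))
          = bm k q ζ a u' v' (a * k + (i : ℕ)) (((i : ℕ) + v) % q) := by
        simp only [MB, Matrix.of_apply, hrow, colF]
      rw [this, bm_in k q ζ a u' v' i _ i.2]
    by_cases hvv : v = v'
    · subst hvv
      simp only [hentry, if_pos rfl, if_true, true_and, and_true]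
      rw [Fin.sum_univ_eq_sum_range
        (fun i => (starRingEnd ℂ) (ζ ^ (u * i)) * ζ ^ (u' * i)),
        fourier_sum k hk hζ hconj u u' hu hu']
    · have : ∀ i : Fin k, ((i : ℕ) + v) % q ≠ ((i : ℕ) + v') % q := by
        intro i h
        exact hvv (mod_add_left_inj q (i : ℕ) v v' hv hv' h)
      simp [hentry, this, hvv]
  · have hentry : ∀ i : Fin k,
        (MB k q d d' ζ a' u' v') (rowF k s d hsk a ha i) (colF q d' hq0 hqd ((i : ℕ) + v)) = 0 := by
      intro i
      have hrow : ((rowF k s d hsk a ha i : Fin d) : ℕ) = a * k + (i : ℕ) := rfl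
      simp only [MB, Matrix.of_apply]
      apply bm_out
      rw [hrow]
      rcases Nat.lt_or_ge a a' with h | h
      · have h1 : (a + 1) * k ≤ a' * k := Nat.mul_le_mul_right k h
        have h2 : (a + 1) * k = a * k + k := by ring
        have hi := i.2
        omega
      · have haa' : a' < a := by omega
        have h1 : (a' + 1) * k ≤ a * k := Nat.mul_le_mul_right k haa'
        have h2 : (a' + 1) * k = a' * k + k := by ring
        omega
    simp [hentry, haa]

/-- `MB * MBᴴ` is a diagonal projection onto the block rows. -/
lemma MB_mul_conjTranspose (k s q d d' : ℕ) (ζ : ℂ) (hk : 0 < k) (hkq : k ≤ q) (hqd : q ≤ d')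
    (hsk : s * k ≤ d) (hζ0 : ζ ≠ 0) (hconj : (starRingEnd ℂ) ζ = ζ⁻¹)
    (a u v : ℕ) (ha : a < s) :
    MB k q d d' ζ a u v * (MB k q d d' ζ a u v)ᴴ
      = Matrix.diagonal (fun x : Fin d => if a * k ≤ (x : ℕ) ∧ (x : ℕ) < a * k + k then 1 else 0) := by
  have hq0 : 0 < q := lt_of_lt_of_le hk hkq
  ext x x'
  rw [Matrix.mul_apply]
  simp only [Matrix.conjTranspose_apply, MB, Matrix.of_apply, Complex.star_def]
  by_cases hx : a * k ≤ (x : ℕ) ∧ (x : ℕ) < a * k + k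
  · by_cases hx' : a * k ≤ (x' : ℕ) ∧ (x' : ℕ) < a * k + k
    · set i := (x : ℕ) - a * k with hidef
      set i' := (x' : ℕ) - a * k with hi'def
      have hi : i < k := by omega
      have hi' : i' < k := by omega
      have hxw : (x : ℕ) = a * k + i := by omega
      have hx'w : (x' : ℕ) = a * k + i' := by omega
      have hterm : ∀ y : Fin d', bm k q ζ a u v x y * (starRingEnd ℂ) (bm k q ζ a u v x' y)
          = if y = colF q d' hq0 hqd (i + v) then
              (if (i + v) % q = (i' + v) % q then ζ ^ (u * i) * (starRingEnd ℂ) (ζ ^ (u * i')) else 0)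
            else 0 := by
        intro y
        rw [show bm k q ζ a u v x y = bm k q ζ a u v (a * k + i) y from by rw [← hxw],
          show bm k q ζ a u v x' y = bm k q ζ a u v (a * k + i') y from by rw [← hx'w],
          bm_in k q ζ a u v i y hi, bm_in k q ζ a u v i' y hi']
        have hcol : (y = colF q d' hq0 hqd (i + v)) ↔ ((y : ℕ) = (i + v) % q) := by
          simp only [colF, Fin.ext_iff]
        by_cases h1 : (y : ℕ) = (i + v) % q
        · rw [if_pos h1, if_pos (hcol.2 h1)]
          by_cases h2 : (y : ℕ) = (i' + v) % q
          · rw [if_pos h2, if_pos (by omega : (i + v) % q = (i' + v) % q)]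
          · rw [if_neg h2, if_neg (by omega : ¬ (i + v) % q = (i' + v) % q), map_zero, mul_zero]
        · rw [if_neg h1, if_neg (fun hc => h1 (hcol.1 hc)), zero_mul]
      simp only [hterm]
      rw [Finset.sum_ite_eq' Finset.univ]
      simp only [Finset.mem_univ, if_pos]
      by_cases hxx : x = x'
      · subst hxx
        have hii : i = i' := by omega
        rw [if_pos (by rw [hii]), Matrix.diagonal_apply_eq, if_pos hx, ← hii]
        rw [show (starRingEnd ℂ) (ζ ^ (u * i)) = (ζ ^ (u * i))⁻¹ from by
          rw [map_pow, hconj, inv_pow]]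
        exact mul_inv_cancel₀ (pow_ne_zero _ hζ0)
      · have hii' : i ≠ i' := by
          intro h; apply hxx; exact Fin.ext (by omega)
        have : ¬ ((i + v) % q = (i' + v) % q) := by
          intro h
          exact hii' (mod_add_right_inj q i i' v (lt_of_lt_of_le hi hkq) (lt_of_lt_of_le hi' hkq) h)
        rw [if_neg this, Matrix.diagonal_apply_ne _ hxx]
    · have hzero : ∀ y : Fin d', bm k q ζ a u v x y * (starRingEnd ℂ) (bm k q ζ a u v x' y) = 0 := by
        intro y
        rw [bm_out k q ζ a u v _ _ hx', map_zero, mul_zero]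
      simp only [hzero, Finset.sum_const_zero]
      have hxx : x ≠ x' := by
        intro h; subst h; exact hx' hx
      rw [Matrix.diagonal_apply_ne _ hxx]
  · have hzero : ∀ y : Fin d', bm k q ζ a u v x y * (starRingEnd ℂ) (bm k q ζ a u v x' y) = 0 := by
      intro y
      rw [bm_out k q ζ a u v _ _ hx, zero_mul]
    simp only [hzero, Finset.sum_const_zero]
    by_cases hxx : x = x'
    · subst hxx
      rw [Matrix.diagonal_apply_eq, if_neg hx]
    · rw [Matrix.diagonal_apply_ne _ hxx]

lemma card_block (n a b : ℕ) (hb : b ≤ n) :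
    Fintype.card {x : Fin n // a ≤ (x : ℕ) ∧ (x : ℕ) < b} = b - a := by
  classical
  rw [Fintype.card_subtype]
  have h : (Finset.univ.filter fun x : Fin n => a ≤ (x : ℕ) ∧ (x : ℕ) < b).card
      = (Finset.Ico a b).card := by
    apply Finset.card_bij (fun (x : Fin n) _ => (x : ℕ))
    · intro x hx
      simp only [Finset.mem_filter] at hx
      simp [Finset.mem_Ico, hx.2.1, hx.2.2]
    · intro x _ y _ hxy
      exact Fin.ext hxy
    · intro m hm
      simp only [Finset.mem_Ico] at hm
      exact ⟨⟨m, by omega⟩, by simp [hm.1, hm.2], rfl⟩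
  rw [h, Nat.card_Ico]

lemma diag_mul_MB (k s q d d' : ℕ) (ζ : ℂ) (a u v : ℕ) :
    Matrix.diagonal (fun x : Fin d => if a * k ≤ (x : ℕ) ∧ (x : ℕ) < a * k + k then (1:ℂ) else 0)
      * MB k q d d' ζ a u v = MB k q d d' ζ a u v := by
  ext x y
  rw [Matrix.diagonal_mul]
  by_cases hx : a * k ≤ (x : ℕ) ∧ (x : ℕ) < a * k + k
  · rw [if_pos hx, one_mul]
  · rw [if_neg hx, zero_mul]
    exact (bm_out k q ζ a u v _ _ hx).symm

lemma MB_proj (k s q d d' : ℕ) (ζ : ℂ) (hk : 0 < k) (hkq : k ≤ q) (hqd : q ≤ d')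
    (hsk : s * k ≤ d) (hζ0 : ζ ≠ 0) (hconj : (starRingEnd ℂ) ζ = ζ⁻¹)
    (a u v : ℕ) (ha : a < s) :
    ((MB k q d d' ζ a u v)ᴴ * MB k q d d' ζ a u v) * ((MB k q d d' ζ a u v)ᴴ * MB k q d d' ζ a u v)
      = (MB k q d d' ζ a u v)ᴴ * MB k q d d' ζ a u v := by
  rw [Matrix.mul_assoc, ← Matrix.mul_assoc (MB k q d d' ζ a u v),
    MB_mul_conjTranspose k s q d d' ζ hk hkq hqd hsk hζ0 hconj a u v ha,
    diag_mul_MB k s q d d' ζ a u v]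

lemma MB_rank (k s q d d' : ℕ) (ζ : ℂ) (hk : 0 < k) (hkq : k ≤ q) (hqd : q ≤ d')
    (hsk : s * k ≤ d) (hζ0 : ζ ≠ 0) (hconj : (starRingEnd ℂ) ζ = ζ⁻¹)
    (a u v : ℕ) (ha : a < s) : (MB k q d d' ζ a u v).rank = k := by
  rw [← Matrix.rank_self_mul_conjTranspose,
    MB_mul_conjTranspose k s q d d' ζ hk hkq hqd hsk hζ0 hconj a u v ha,
    Matrix.rank_diagonal]
  have e := Equiv.subtypeEquivRight (p := fun x : Fin d =>
      (if a * k ≤ (x : ℕ) ∧ (x : ℕ) < a * k + k then (1:ℂ) else 0) ≠ 0)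
    (q := fun x : Fin d => a * k ≤ (x : ℕ) ∧ (x : ℕ) < a * k + k)
    (fun x => by
      constructor
      · intro hne
        by_contra hP
        exact hne (if_neg hP)
      · intro hP
        rw [if_pos hP]
        exact one_ne_zero)
  rw [Fintype.card_congr e, card_block d (a * k) (a * k + k)
    (by
      have h1 : (a + 1) * k ≤ s * k := Nat.mul_le_mul_right k ha
      have h2 : (a + 1) * k = a * k + k := by ring
      omega)]
  omega

lemma rank_add_le {m n : ℕ} (A B : Matrix (Fin m) (Fin n) ℂ) :
    (A + B).rank ≤ A.rank + B.rank := by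
  rw [Matrix.rank, Matrix.rank, Matrix.rank, Matrix.mulVecLin_add]
  have hle : LinearMap.range (A.mulVecLin + B.mulVecLin)
      ≤ LinearMap.range A.mulVecLin ⊔ LinearMap.range B.mulVecLin := by
    rintro _ ⟨x, rfl⟩
    exact Submodule.mem_sup.2 ⟨_, ⟨x, rfl⟩, _, ⟨x, rfl⟩, rfl⟩
  exact (Submodule.finrank_mono hle).trans
    (Submodule.finrank_add_le_finrank_add_finrank _ _)

end

end SUEBhelper

open SUEBhelper Complex Finset in
/-- Case (2): let `2 ≤ k ≤ d ≤ d'` with `k ∤ d`, and write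
`d = s·k + r`, `0 < r < k`. For every `t` with `0 ≤ t ≤ k-r-1` and `d'-t ≥ k`, there
is an `s·k·(d'-t)`-number USV1Bk in `M_{d×d'}`, consisting of matrices supported on
the top-left `s·k × (d'-t)` submatrix. -/
theorem case2_SUEBk (k d d' s r : ℕ) (hk : 2 ≤ k) (hkd : k ≤ d) (hdd : d ≤ d')
    (hd : d = s * k + r) (hr1 : 0 < r) (hr2 : r < k)
    (t : ℕ) (ht : t ≤ k - r - 1) (ht2 : k ≤ d' - t) :
    ∃ A : Fin (s * k * (d' - t)) → Matrix (Fin d) (Fin d') ℂ,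
      (∀ m, IsSV1 k (A m)) ∧
      (∀ m n, ((A m)ᴴ * A n).trace = if m = n then (k : ℂ) else 0) ∧
      (∀ B : Matrix (Fin d) (Fin d') ℂ,
        (∀ m, ((A m)ᴴ * B).trace = 0) → ¬ IsSV1 k B) ∧
      (∀ m (x : Fin d) (y : Fin d'),
        s * k ≤ (x : ℕ) ∨ d' - t ≤ (y : ℕ) → A m x y = 0) := by
  set q : ℕ := d' - t with hqdef
  have hk0 : 0 < k := by omega
  have hkq : k ≤ q := ht2
  have hq0 : 0 < q := by omega
  have hqd : q ≤ d' := Nat.sub_le _ _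
  have hsk : s * k ≤ d := by omega
  have htd' : t ≤ d' := by omega
  have hqt : d' - q = t := by omega
  -- the k-th root of unity
  set ζ : ℂ := Complex.exp (2 * Real.pi * Complex.I / k) with hζdef
  have hprim : IsPrimitiveRoot ζ k := Complex.isPrimitiveRoot_exp k (by omega)
  have hconj : (starRingEnd ℂ) ζ = ζ⁻¹ := by
    rw [hζdef, ← Complex.exp_conj]
    rw [show (starRingEnd ℂ) (2 * Real.pi * Complex.I / k) = -(2 * Real.pi * Complex.I / k) from by
      simp [map_div₀, Complex.conj_I, map_ofNat]; ring]
    rw [Complex.exp_neg]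
  have hζ0 : ζ ≠ 0 := Complex.exp_ne_zero _
  -- index equivalence
  let e : Fin (s * k * q) ≃ (Fin s × Fin k) × Fin q :=
    finProdFinEquiv.symm.trans (finProdFinEquiv.symm.prodCongr (Equiv.refl (Fin q)))
  refine ⟨fun m => MB k q d d' ζ ((e m).1.1 : ℕ) ((e m).1.2 : ℕ) ((e m).2 : ℕ), ?_, ?_, ?_, ?_⟩
  · -- each is a k-singular-value-1 matrix
    intro m
    exact ⟨MB_proj k s q d d' ζ hk0 hkq hqd hsk hζ0 hconj _ _ _ (e m).1.1.2,
      MB_rank k s q d d' ζ hk0 hkq hqd hsk hζ0 hconj _ _ _ (e m).1.1.2⟩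
  · -- pairwise traces
    intro m n
    rw [pair_trace k s q d d' ζ hk0 hkq hqd hsk hprim hconj _ _ _ _ _ _
      (e m).1.1.2 (e n).1.1.2 (e m).1.2.2 (e n).1.2.2 (e m).2.2 (e n).2.2]
    by_cases h : m = n
    · subst h; simp
    · rw [if_neg _, if_neg h]
      rintro ⟨h1, h2, h3⟩
      apply h
      apply e.injective
      exact Prod.ext (Prod.ext (Fin.ext h1) (Fin.ext h2)) (Fin.ext h3)
  · -- unextendibility
    intro B hB hSV
    obtain ⟨-, hrank⟩ := hSV
    -- Step A: block entries of B vanish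
    have hzero : ∀ (x : Fin d) (y : Fin d'), (x : ℕ) < s * k → (y : ℕ) < q → B x y = 0 := by
      intro x y hx hy
      set a : ℕ := (x : ℕ) / k with hadef
      set i : ℕ := (x : ℕ) % k with hidef
      have hdm := Nat.div_add_mod (x : ℕ) k
      have ha : a < s := by
        rw [hadef]
        exact Nat.div_lt_of_lt_mul (by rw [Nat.mul_comm k s]; exact hx)
      have hi : i < k := Nat.mod_lt _ hk0
      have hcomm : a * k = k * ((x : ℕ) / k) := by rw [hadef, Nat.mul_comm]
      have hxw : (x : ℕ) = a * k + i := by omega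
      set v : ℕ := (q + (y : ℕ) - i) % q with hvdef
      have hv : v < q := Nat.mod_lt _ hq0
      have hiv : (i + v) % q = (y : ℕ) := by
        rw [hvdef, Nat.add_mod_mod,
          show i + (q + (y : ℕ) - i) = q + (y : ℕ) from by omega,
          Nat.add_mod_left, Nat.mod_eq_of_lt hy]
      -- for each u, the weighted row sums vanish
      have h1 : ∀ u : Fin k, ∑ j : Fin k,
          (starRingEnd ℂ) (ζ ^ ((u : ℕ) * (j : ℕ))) *
            B (rowF k s d hsk a ha j) (colF q d' hq0 hqd ((j : ℕ) + v)) = 0 := by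
        intro u
        have h0 := hB (e.symm ((⟨a, ha⟩, u), ⟨v, hv⟩))
        simp only [Equiv.apply_symm_apply] at h0
        rwa [trace_MB k s q d d' ζ hq0 hqd hsk a u v ha B] at h0
      have h2 : ∑ u : Fin k, ζ ^ ((u : ℕ) * i) * ∑ j : Fin k,
          (starRingEnd ℂ) (ζ ^ ((u : ℕ) * (j : ℕ))) *
            B (rowF k s d hsk a ha j) (colF q d' hq0 hqd ((j : ℕ) + v)) = 0 := by
        refine Finset.sum_eq_zero fun u _ => ?_
        rw [h1 u, mul_zero]
      have h3 : ∑ j : Fin k, (∑ u : Fin k, ζ ^ ((u : ℕ) * i) *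
            (starRingEnd ℂ) (ζ ^ ((u : ℕ) * (j : ℕ)))) *
            B (rowF k s d hsk a ha j) (colF q d' hq0 hqd ((j : ℕ) + v)) = 0 := by
        rw [← h2]
        simp only [Finset.mul_sum]
        rw [Finset.sum_comm]
        apply Finset.sum_congr rfl
        intro j _
        rw [Finset.sum_mul]
        apply Finset.sum_congr rfl
        intro u _
        ring
      have hinner : ∀ j : Fin k, (∑ u : Fin k, ζ ^ ((u : ℕ) * i) *
          (starRingEnd ℂ) (ζ ^ ((u : ℕ) * (j : ℕ)))) = if (j : ℕ) = i then (k : ℂ) else 0 := by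
        intro j
        have : ∀ u : Fin k, ζ ^ ((u : ℕ) * i) * (starRingEnd ℂ) (ζ ^ ((u : ℕ) * (j : ℕ)))
            = (starRingEnd ℂ) (ζ ^ ((j : ℕ) * (u : ℕ))) * ζ ^ (i * (u : ℕ)) := by
          intro u
          rw [mul_comm ((u : ℕ)) ((j : ℕ)), mul_comm ((u : ℕ)) i, mul_comm]
        rw [Finset.sum_congr rfl fun u _ => this u]
        rw [Fin.sum_univ_eq_sum_range (fun u => (starRingEnd ℂ) (ζ ^ ((j : ℕ) * u)) * ζ ^ (i * u))]
        exact fourier_sum k hk0 hprim hconj (j : ℕ) i j.2 hi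
      simp only [hinner] at h3
      have h4 : ∑ j : Fin k, (if (j : ℕ) = i then (k : ℂ) else 0) *
          B (rowF k s d hsk a ha j) (colF q d' hq0 hqd ((j : ℕ) + v))
          = (k : ℂ) * B (rowF k s d hsk a ha (⟨i, hi⟩ : Fin k))
              (colF q d' hq0 hqd (i + v)) := by
        rw [Finset.sum_eq_single (⟨i, hi⟩ : Fin k)]
        · rw [if_pos rfl]
        · intro j _ hj
          rw [if_neg (fun h => hj (Fin.ext h)), zero_mul]
        · intro h; exact absurd (Finset.mem_univ _) h
      rw [h4] at h3
      have hrow : rowF k s d hsk a ha (⟨i, hi⟩ : Fin k) = x := Fin.ext (by simp [rowF]; omega)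
      have hcol : colF q d' hq0 hqd (i + v) = y := Fin.ext (by simp [colF, hiv])
      rw [hrow, hcol] at h3
      have hkne : (k : ℂ) ≠ 0 := Nat.cast_ne_zero.2 (by omega)
      exact (mul_eq_zero.1 h3).resolve_left hkne
    -- Step B: rank of B is at most t + r < k
    have htr : t + r < k := by omega
    set Dc : Matrix (Fin d') (Fin d') ℂ :=
      Matrix.diagonal (fun y : Fin d' => if q ≤ (y : ℕ) then 1 else 0) with hDc
    set Dc' : Matrix (Fin d') (Fin d') ℂ :=
      Matrix.diagonal (fun y : Fin d' => if (y : ℕ) < q then 1 else 0) with hDc'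
    set Dr : Matrix (Fin d) (Fin d) ℂ :=
      Matrix.diagonal (fun x : Fin d => if s * k ≤ (x : ℕ) then 1 else 0) with hDr
    have hsplit : B = B * Dc + Dr * (B * Dc') := by
      ext x y
      simp only [Matrix.add_apply, hDc, hDc', hDr, Matrix.mul_diagonal, Matrix.diagonal_mul]
      by_cases hy : (y : ℕ) < q
      · rw [if_neg (by omega), if_pos hy, mul_zero, zero_add]
        by_cases hx : s * k ≤ (x : ℕ)
        · rw [if_pos hx]
          ring
        · rw [if_neg hx, hzero x y (by omega) hy]
          ring
      · rw [if_pos (by omega), if_neg hy, mul_one, mul_zero, mul_zero, add_zero]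
    have hrc : (B * Dc).rank ≤ t := by
      calc (B * Dc).rank ≤ Dc.rank := Matrix.rank_mul_le_right _ _
        _ = t := by
          rw [hDc, Matrix.rank_diagonal]
          have e2 := Equiv.subtypeEquivRight (p := fun y : Fin d' =>
              (if q ≤ (y : ℕ) then (1:ℂ) else 0) ≠ 0)
            (q := fun y : Fin d' => q ≤ (y : ℕ) ∧ (y : ℕ) < d')
            (fun y => by
              constructor
              · intro hne
                refine ⟨?_, y.2⟩
                by_contra h
                exact hne (if_neg h)
              · rintro ⟨h, -⟩
                rw [if_pos h]
                exact one_ne_zero)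
          rw [Fintype.card_congr e2, card_block d' q d' le_rfl]
          omega
    have hrr : (Dr * (B * Dc')).rank ≤ r := by
      calc (Dr * (B * Dc')).rank ≤ Dr.rank := Matrix.rank_mul_le_left _ _
        _ = r := by
          rw [hDr, Matrix.rank_diagonal]
          have e2 := Equiv.subtypeEquivRight (p := fun x : Fin d =>
              (if s * k ≤ (x : ℕ) then (1:ℂ) else 0) ≠ 0)
            (q := fun x : Fin d => s * k ≤ (x : ℕ) ∧ (x : ℕ) < d)
            (fun x => by
              constructor
              · intro hne
                refine ⟨?_, x.2⟩
                by_contra h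
                exact hne (if_neg h)
              · rintro ⟨h, -⟩
                rw [if_pos h]
                exact one_ne_zero)
          rw [Fintype.card_congr e2, card_block d (s * k) d le_rfl]
          omega
    have hfinal : B.rank ≤ t + r := by
      calc B.rank = (B * Dc + Dr * (B * Dc')).rank := by rw [← hsplit]
        _ ≤ (B * Dc).rank + (Dr * (B * Dc')).rank := SUEBhelper.rank_add_le _ _
        _ ≤ t + r := add_le_add hrc hrr
    omega
  · -- support condition
    intro m x y h
    exact bm_support k q s ζ _ _ _ _ _ hq0 (e m).1.1.2 h
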